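/- For all r₁,r₂,r₃,r₄ > 0: the function N is strictly positive on the open square S, G is differentiable on S, and for every (a₁,a₂) ∈ S the gradient of G vanishes at (a₁,a₂) if and only if P(a₁,a₂) = 0 and Q(a₁,a₂) = 0. -/

import Mathlib

noncomputable section

/-- `K = r₁ + r₃ − r₂ − r₄`. -/
def Kq (r₁ r₂ r₃ r₄ : ℝ) : ℝ := r₁ + r₃ - r₂ - r₄

/-- `N(a₁,a₂) = a₁a₂K + a₁(K+2(r₂−r₃)) + a₂(K+2(r₄−r₃)) + K + 2(r₂+r₄)`. -/
def Nq (r₁ r₂ r₃ r₄ a₁ a₂ : ℝ) : ℝ :=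
  a₁ * a₂ * Kq r₁ r₂ r₃ r₄ + a₁ * (Kq r₁ r₂ r₃ r₄ + 2 * (r₂ - r₃)) +
    a₂ * (Kq r₁ r₂ r₃ r₄ + 2 * (r₄ - r₃)) + Kq r₁ r₂ r₃ r₄ + 2 * (r₂ + r₄)

/-- `P(a₁,a₂) = 3(1−a₁²)·∂N/∂a₁ + 2a₁·N`, where `∂N/∂a₁ = a₂K + K + 2(r₂−r₃)`. -/
def Pq (r₁ r₂ r₃ r₄ a₁ a₂ : ℝ) : ℝ :=
  3 * (1 - a₁ ^ 2) * (a₂ * Kq r₁ r₂ r₃ r₄ + (Kq r₁ r₂ r₃ r₄ + 2 * (r₂ - r₃))) +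
    2 * a₁ * Nq r₁ r₂ r₃ r₄ a₁ a₂

/-- `Q(a₁,a₂) = 3(1−a₂²)·∂N/∂a₂ + 2a₂·N`, where `∂N/∂a₂ = a₁K + K + 2(r₄−r₃)`. -/
def Qq (r₁ r₂ r₃ r₄ a₁ a₂ : ℝ) : ℝ :=
  3 * (1 - a₂ ^ 2) * (a₁ * Kq r₁ r₂ r₃ r₄ + (Kq r₁ r₂ r₃ r₄ + 2 * (r₄ - r₃))) +
    2 * a₂ * Nq r₁ r₂ r₃ r₄ a₁ a₂

/-- The open square `S = {(a₁,a₂) : |a₁| < 1, |a₂| < 1}`. -/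
def Sq : Set (ℝ × ℝ) := {a | |a.1| < 1 ∧ |a.2| < 1}

/-- `G(a₁,a₂) = N(a₁,a₂)³ / ((1−a₁²)(1−a₂²))` on `S`. -/
def Gq (r₁ r₂ r₃ r₄ : ℝ) (a : ℝ × ℝ) : ℝ :=
  Nq r₁ r₂ r₃ r₄ a.1 a.2 ^ 3 / ((1 - a.1 ^ 2) * (1 - a.2 ^ 2))

/-!
On the square, `N = r₁(1+a₁)(1+a₂) + r₂(1+a₁)(1-a₂) + r₃(1-a₁)(1-a₂) + r₄(1-a₁)(1+a₂)` is a sum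
of positive terms. Since `d/dt (n³/(1-t²)) = n²(3(1-t²)n' + 2tn)/(1-t²)²`, the partial derivatives
of `G` are `N²P/((1-a₁²)²(1-a₂²))` and `N²Q/((1-a₁²)(1-a₂²)²)`, so, `N` being nonzero, the
gradient vanishes exactly where `P = Q = 0`.
-/

section Slices

variable {𝕜 F : Type*} [NontriviallyNormedField 𝕜] [NormedAddCommGroup F] [NormedSpace 𝕜 F]

theorem HasFDerivAt.hasDerivAt_slice_fst {f : 𝕜 × 𝕜 → F} {L : 𝕜 × 𝕜 →L[𝕜] F} {p : 𝕜 × 𝕜}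
    (h : HasFDerivAt f L p) : HasDerivAt (fun t => f (t, p.2)) (L (1, 0)) p.1 :=
  h.comp_hasDerivAt p.1 ((hasDerivAt_id p.1).prodMk (hasDerivAt_const p.1 p.2))

theorem HasFDerivAt.hasDerivAt_slice_snd {f : 𝕜 × 𝕜 → F} {L : 𝕜 × 𝕜 →L[𝕜] F} {p : 𝕜 × 𝕜}
    (h : HasFDerivAt f L p) : HasDerivAt (fun t => f (p.1, t)) (L (0, 1)) p.2 :=
  h.comp_hasDerivAt p.2 ((hasDerivAt_const p.2 p.1).prodMk (hasDerivAt_id p.2))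

theorem ContinuousLinearMap.eq_zero_iff_apply_one_zero_and_zero_one (L : 𝕜 × 𝕜 →L[𝕜] F) :
    L = 0 ↔ L (1, 0) = 0 ∧ L (0, 1) = 0 := by
  refine ⟨fun h => by simp [h], fun ⟨h₁, h₂⟩ => ?_⟩
  refine ContinuousLinearMap.prod_ext (ContinuousLinearMap.ext_ring ?_)
    (ContinuousLinearMap.ext_ring ?_) <;> simpa

end Slices

theorem HasDerivAt.cube_div_one_sub_sq {n : ℝ → ℝ} {n' t : ℝ} (hn : HasDerivAt n n' t)
    (ht : 1 - t ^ 2 ≠ 0) :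
    HasDerivAt (fun s => n s ^ 3 / (1 - s ^ 2))
      (n t ^ 2 * (3 * (1 - t ^ 2) * n' + 2 * t * n t) / (1 - t ^ 2) ^ 2) t := by
  have hden : HasDerivAt (fun s : ℝ => 1 - s ^ 2) (-(2 * t)) t := by
    simpa using (hasDerivAt_pow 2 t).const_sub 1
  refine ((hn.fun_pow 3).fun_div hden ht).congr_deriv ?_
  push_cast
  ring

theorem one_sub_sq_pos_of_abs_lt_one {x : ℝ} (hx : |x| < 1) : 0 < 1 - x ^ 2 :=
  sub_pos.2 ((sq_lt_one_iff_abs_lt_one x).2 hx)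

section Square

variable (r₁ r₂ r₃ r₄ : ℝ)

theorem Nq_eq_bilinear (a₁ a₂ : ℝ) :
    Nq r₁ r₂ r₃ r₄ a₁ a₂ = r₁ * (1 + a₁) * (1 + a₂) + r₂ * (1 + a₁) * (1 - a₂) +
      r₃ * (1 - a₁) * (1 - a₂) + r₄ * (1 - a₁) * (1 + a₂) := by
  unfold Nq Kq
  ring

theorem hasDerivAt_Nq_fst (a₁ a₂ : ℝ) :
    HasDerivAt (fun t => Nq r₁ r₂ r₃ r₄ t a₂)
      (a₂ * Kq r₁ r₂ r₃ r₄ + (Kq r₁ r₂ r₃ r₄ + 2 * (r₂ - r₃))) a₁ := by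
  have : (fun t => Nq r₁ r₂ r₃ r₄ t a₂) = fun t =>
      t * (a₂ * Kq r₁ r₂ r₃ r₄ + (Kq r₁ r₂ r₃ r₄ + 2 * (r₂ - r₃))) + Nq r₁ r₂ r₃ r₄ 0 a₂ := by
    funext t
    unfold Nq
    ring
  rw [this]
  exact (hasDerivAt_mul_const _).add_const _

theorem hasDerivAt_Nq_snd (a₁ a₂ : ℝ) :
    HasDerivAt (fun t => Nq r₁ r₂ r₃ r₄ a₁ t)
      (a₁ * Kq r₁ r₂ r₃ r₄ + (Kq r₁ r₂ r₃ r₄ + 2 * (r₄ - r₃))) a₂ := by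
  have : (fun t => Nq r₁ r₂ r₃ r₄ a₁ t) = fun t =>
      t * (a₁ * Kq r₁ r₂ r₃ r₄ + (Kq r₁ r₂ r₃ r₄ + 2 * (r₄ - r₃))) + Nq r₁ r₂ r₃ r₄ a₁ 0 := by
    funext t
    unfold Nq
    ring
  rw [this]
  exact (hasDerivAt_mul_const _).add_const _

theorem hasDerivAt_Gq_slice_fst {a₁ : ℝ} (a₂ : ℝ) (h₁ : 1 - a₁ ^ 2 ≠ 0) :
    HasDerivAt (fun t => Gq r₁ r₂ r₃ r₄ (t, a₂))
      (Nq r₁ r₂ r₃ r₄ a₁ a₂ ^ 2 * Pq r₁ r₂ r₃ r₄ a₁ a₂ / ((1 - a₁ ^ 2) ^ 2 * (1 - a₂ ^ 2))) a₁ := by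
  simpa only [Gq, Pq, div_div] using
    ((hasDerivAt_Nq_fst r₁ r₂ r₃ r₄ a₁ a₂).cube_div_one_sub_sq h₁).div_const (1 - a₂ ^ 2)

theorem hasDerivAt_Gq_slice_snd (a₁ : ℝ) {a₂ : ℝ} (h₂ : 1 - a₂ ^ 2 ≠ 0) :
    HasDerivAt (fun t => Gq r₁ r₂ r₃ r₄ (a₁, t))
      (Nq r₁ r₂ r₃ r₄ a₁ a₂ ^ 2 * Qq r₁ r₂ r₃ r₄ a₁ a₂ / ((1 - a₁ ^ 2) * (1 - a₂ ^ 2) ^ 2)) a₂ := by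
  simpa only [Gq, Qq, div_div, mul_comm (1 - a₁ ^ 2)] using
    ((hasDerivAt_Nq_snd r₁ r₂ r₃ r₄ a₁ a₂).cube_div_one_sub_sq h₂).div_const (1 - a₁ ^ 2)

theorem differentiableAt_Gq {a : ℝ × ℝ} (h₁ : 1 - a.1 ^ 2 ≠ 0) (h₂ : 1 - a.2 ^ 2 ≠ 0) :
    DifferentiableAt ℝ (Gq r₁ r₂ r₃ r₄) a := by
  unfold Gq Nq
  fun_prop (disch := exact mul_ne_zero h₁ h₂)

end Square

theorem Nq_pos {r₁ r₂ r₃ r₄ : ℝ} (hr₁ : 0 < r₁) (hr₂ : 0 < r₂) (hr₃ : 0 < r₃) (hr₄ : 0 < r₄)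
    {a : ℝ × ℝ} (ha : a ∈ Sq) : 0 < Nq r₁ r₂ r₃ r₄ a.1 a.2 := by
  obtain ⟨h₁, h₂⟩ := ha
  rw [abs_lt] at h₁ h₂
  have : 0 < 1 + a.1 := by linarith
  have : 0 < 1 - a.1 := by linarith
  have : 0 < 1 + a.2 := by linarith
  have : 0 < 1 - a.2 := by linarith
  rw [Nq_eq_bilinear]
  positivity

/-- For all `r₁,r₂,r₃,r₄ > 0`: `N` is strictly positive on the open
square `S`, `G` is differentiable on `S`, and for every `(a₁,a₂) ∈ S` the gradient of `G`
vanishes at `(a₁,a₂)` if and only if `P(a₁,a₂) = 0` and `Q(a₁,a₂) = 0`. -/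
theorem stmt14 (r₁ r₂ r₃ r₄ : ℝ)
    (hr₁ : 0 < r₁) (hr₂ : 0 < r₂) (hr₃ : 0 < r₃) (hr₄ : 0 < r₄) :
    (∀ a ∈ Sq, 0 < Nq r₁ r₂ r₃ r₄ a.1 a.2) ∧
      (∀ a ∈ Sq, DifferentiableAt ℝ (Gq r₁ r₂ r₃ r₄) a) ∧
      ∀ a ∈ Sq,
        (fderiv ℝ (Gq r₁ r₂ r₃ r₄) a = 0 ↔
          Pq r₁ r₂ r₃ r₄ a.1 a.2 = 0 ∧ Qq r₁ r₂ r₃ r₄ a.1 a.2 = 0) := by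
  have hden {a : ℝ × ℝ} (ha : a ∈ Sq) : 0 < 1 - a.1 ^ 2 ∧ 0 < 1 - a.2 ^ 2 :=
    ⟨one_sub_sq_pos_of_abs_lt_one ha.1, one_sub_sq_pos_of_abs_lt_one ha.2⟩
  have hdiff {a : ℝ × ℝ} (ha : a ∈ Sq) : DifferentiableAt ℝ (Gq r₁ r₂ r₃ r₄) a :=
    differentiableAt_Gq r₁ r₂ r₃ r₄ (hden ha).1.ne' (hden ha).2.ne'
  refine ⟨fun a ha => Nq_pos hr₁ hr₂ hr₃ hr₄ ha, fun a ha => hdiff ha, fun a ha => ?_⟩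
  obtain ⟨h₁, h₂⟩ := hden ha
  have hN := (Nq_pos hr₁ hr₂ hr₃ hr₄ ha).ne'
  have hG := (hdiff ha).hasFDerivAt
  rw [ContinuousLinearMap.eq_zero_iff_apply_one_zero_and_zero_one,
    hG.hasDerivAt_slice_fst.unique (hasDerivAt_Gq_slice_fst r₁ r₂ r₃ r₄ a.2 h₁.ne'),
    hG.hasDerivAt_slice_snd.unique (hasDerivAt_Gq_slice_snd r₁ r₂ r₃ r₄ a.1 h₂.ne')]
  simp [hN, h₁.ne', h₂.ne']
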